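/- arXiv:1606.09445 — 3 statements merged into one kernel-verified Lean document; each statement's English description precedes it below -/
import Mathlib

section
/- All 2×2 minors of the 2×(n−1) matrix with first row (𝗎_2, 𝗎_3, …, 𝗎_n, 𝗏^{p_2}) and second row (𝗏^{p_1}, λ_3𝗎_3+𝗏^{p_3}, …, λ_n𝗎_n+𝗏^{p_n}, 𝗎_1) vanish in S; explicitly: 𝗎_1𝗎_2 = 𝗏^{p_1+p_2}; 𝗎_1𝗎_i = 𝗏^{p_2}(λ_i𝗎_i + 𝗏^{p_i}) for 3 ≤ i ≤ n; 𝗎_2(λ_i𝗎_i + 𝗏^{p_i}) = 𝗏^{p_1}𝗎_i for 3 ≤ i ≤ n; and 𝗎_i(λ_j𝗎_j + 𝗏^{p_j}) = 𝗎_j(λ_i𝗎_i + 𝗏^{p_i}) for 3 ≤ i < j ≤ n. -/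
set_option synthInstance.maxHeartbeats 1000000
set_option maxHeartbeats 1000000

noncomputable section

open MvPolynomial

def LRel (ι : Type) [DecidableEq ι] (p : ι → ℕ) : AddSubgroup (Option ι → ℤ) :=
  AddSubgroup.closure
    { v | ∃ i : ι, v = (p i : ℤ) • Pi.single (some i) 1 - Pi.single (none : Option ι) 1 }

abbrev LGroup (ι : Type) [DecidableEq ι] (p : ι → ℕ) : Type :=
  (Option ι → ℤ) ⧸ LRel ι p

def egen {ι : Type} [DecidableEq ι] (p : ι → ℕ) (i : ι) : LGroup ι p :=
  QuotientAddGroup.mk (Pi.single (some i) 1)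

def cgen {ι : Type} [DecidableEq ι] (p : ι → ℕ) : LGroup ι p :=
  QuotientAddGroup.mk (Pi.single (none : Option ι) 1)

abbrev BPoly (n : ℕ) : Type := MvPolynomial (Fin n) ℂ

/-- The defining ideal `(xᵢ^{pᵢ} + x₁^{p₁} − λᵢx₂^{p₂} : 3 ≤ i ≤ n)` (0-indexed). -/
def BIdl (n : ℕ) [NeZero n] (p : Fin n → ℕ) (lam : Fin n → ℂ) : Ideal (BPoly n) :=
  Ideal.span { f | ∃ i : Fin n, 2 ≤ (i : ℕ) ∧
    f = X i ^ p i + X 0 ^ p 0 - C (lam i) * X 1 ^ p 1 }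

abbrev BAlg (n : ℕ) [NeZero n] (p : Fin n → ℕ) (lam : Fin n → ℂ) : Type :=
  BPoly n ⧸ BIdl n p lam

/-- The `L`-weight of an exponent vector, `deg xᵢ := eᵢ`. -/
def wtB {n : ℕ} (p : Fin n → ℕ) (m : Fin n →₀ ℕ) : LGroup (Fin n) p :=
  ∑ i : Fin n, m i • egen p i

def polyCompB {n : ℕ} (p : Fin n → ℕ) (y : LGroup (Fin n) p) :
    Submodule ℂ (BPoly n) where
  carrier := { f | ∀ m, coeff m f ≠ 0 → wtB p m = y }
  add_mem' := by
    intro f g hf hg m hm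
    by_cases h : coeff m f = 0
    · refine hg m fun h' => hm ?_
      simp [coeff_add, h, h']
    · exact hf m h
  zero_mem' := by
    intro m hm
    simp at hm
  smul_mem' := by
    intro c f hf m hm
    refine hf m fun h => hm ?_
    simp [coeff_smul, h]

/-- The homogeneous component `S_y ⊆ S` of the `L`-graded algebra `S`. -/
def SCompB (n : ℕ) [NeZero n] (p : Fin n → ℕ) (lam : Fin n → ℂ) (y : LGroup (Fin n) p) :
    Submodule ℂ (BAlg n p lam) :=
  (polyCompB p y).map (Ideal.Quotient.mkₐ ℂ (BIdl n p lam)).toLinearMap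

/-- The Veronese subring `S^x = ⊕_{k ∈ ℤ} S_{kx}`, as a subspace of `S`. -/
def SVerB (n : ℕ) [NeZero n] (p : Fin n → ℕ) (lam : Fin n → ℂ) (x : LGroup (Fin n) p) :
    Submodule ℂ (BAlg n p lam) :=
  ⨆ k : ℤ, SCompB n p lam (k • x)

/-- `S(y)^x = ⊕_{k ∈ ℤ} S_{y + kx}`, as a subspace of `S`. -/
def SShiftB (n : ℕ) [NeZero n] (p : Fin n → ℕ) (lam : Fin n → ℂ)
    (y x : LGroup (Fin n) p) : Submodule ℂ (BAlg n p lam) :=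
  ⨆ k : ℤ, SCompB n p lam (y + k • x)

/-- The polynomials `𝗎₁, …, 𝗎ₙ` (0-indexed). -/
def uPoly (n : ℕ) [NeZero n] (p : Fin n → ℕ) (i : Fin n) : BPoly n :=
  if (i : ℕ) = 0 then
    X 0 ^ (p 0 + p 1) * ∏ j ∈ Finset.univ.filter (fun j : Fin n => 2 ≤ (j : ℕ)), X j ^ p 1
  else if (i : ℕ) = 1 then
    X 1 ^ (p 0 + p 1) * ∏ j ∈ Finset.univ.filter (fun j : Fin n => 2 ≤ (j : ℕ)), X j ^ p 0
  else
    -(X 0 ^ p i * X 1 ^ (p 1 + p i) *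
      ∏ j ∈ Finset.univ.filter (fun j : Fin n => 2 ≤ (j : ℕ) ∧ j ≠ i), X j ^ p i)

/-- The elements `𝗎ᵢ ∈ S`. -/
def uElem (n : ℕ) [NeZero n] (p : Fin n → ℕ) (lam : Fin n → ℂ) (i : Fin n) :
    BAlg n p lam :=
  Ideal.Quotient.mk (BIdl n p lam) (uPoly n p i)

/-- The element `𝗏 = x₁x₂⋯xₙ ∈ S`. -/
def vElem (n : ℕ) [NeZero n] (p : Fin n → ℕ) (lam : Fin n → ℂ) : BAlg n p lam :=
  Ideal.Quotient.mk (BIdl n p lam) (∏ i : Fin n, X i)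

/-- All `2×2` minors of the matrix
`(𝗎₂, 𝗎₃, …, 𝗎ₙ, 𝗏^{p₂} ; 𝗏^{p₁}, λ₃𝗎₃+𝗏^{p₃}, …, λₙ𝗎ₙ+𝗏^{pₙ}, 𝗎₁)` vanish in `S`. -/
theorem minor_relations (n : ℕ) (hn : 3 ≤ n) [NeZero n] (p : Fin n → ℕ)
    (hp : ∀ i, 2 ≤ p i) (lam : Fin n → ℂ)
    (hlam0 : ∀ i : Fin n, 2 ≤ (i : ℕ) → lam i ≠ 0)
    (hlamd : ∀ i j : Fin n, 2 ≤ (i : ℕ) → 2 ≤ (j : ℕ) → i ≠ j → lam i ≠ lam j) :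
    uElem n p lam 0 * uElem n p lam 1 = vElem n p lam ^ (p 0 + p 1) ∧
    (∀ i : Fin n, 2 ≤ (i : ℕ) →
      uElem n p lam 0 * uElem n p lam i =
        vElem n p lam ^ p 1 * (lam i • uElem n p lam i + vElem n p lam ^ p i)) ∧
    (∀ i : Fin n, 2 ≤ (i : ℕ) →
      uElem n p lam 1 * (lam i • uElem n p lam i + vElem n p lam ^ p i) =
        vElem n p lam ^ p 0 * uElem n p lam i) ∧
    (∀ i j : Fin n, 2 ≤ (i : ℕ) → (i : ℕ) < (j : ℕ) →
      uElem n p lam i * (lam j • uElem n p lam j + vElem n p lam ^ p j) =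
        uElem n p lam j * (lam i • uElem n p lam i + vElem n p lam ^ p i)) := by
    classical
  have h0v : ((0 : Fin n) : ℕ) = 0 := rfl
  have h1v : ((1 : Fin n) : ℕ) = 1 := by
    rw [Fin.val_one', Nat.mod_eq_of_lt (by omega)]
  set F := Finset.univ.filter (fun j : Fin n => 2 ≤ (j : ℕ)) with hF
  have hg : ∀ i : Fin n, 2 ≤ (i : ℕ) →
      (X i ^ p i + X 0 ^ p 0 - C (lam i) * X 1 ^ p 1) ∈ BIdl n p lam :=
    fun i hi => Ideal.subset_span ⟨i, hi, rfl⟩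
  have hiF : ∀ i : Fin n, 2 ≤ (i : ℕ) → i ∈ F := by
    intro i hi; simp [hF, hi]
  have hs : ∀ (c : ℂ) (f : BPoly n),
      c • (Ideal.Quotient.mk (BIdl n p lam) f) =
        Ideal.Quotient.mk (BIdl n p lam) (C c * f) := by
    intro c f
    rw [← MvPolynomial.smul_eq_C_mul, ← Ideal.Quotient.mkₐ_eq_mk ℂ, map_smul]
  have hprodU : (∏ k : Fin n, (X k : BPoly n)) = X 0 * X 1 * ∏ k ∈ F, X k := by
    have hnot : Finset.univ.filter (fun j : Fin n => ¬ 2 ≤ (j : ℕ)) = {0, 1} := by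
      ext k
      simp only [Finset.mem_filter, Finset.mem_univ, true_and, Finset.mem_insert,
        Finset.mem_singleton, Fin.ext_iff, h0v, h1v]
      omega
    have h01 : (0 : Fin n) ≠ 1 := by
      simp only [ne_eq, Fin.ext_iff, h0v, h1v]; omega
    rw [← Finset.prod_filter_mul_prod_filter_not Finset.univ
      (fun j : Fin n => 2 ≤ (j : ℕ)) (fun k => (X k : BPoly n)), hnot,
      Finset.prod_pair h01, ← hF]
    ring
  have hfilter : ∀ i : Fin n,
      (Finset.univ.filter (fun j : Fin n => 2 ≤ (j : ℕ) ∧ j ≠ i)) = F.erase i := by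
    intro i; ext k
    simp only [Finset.mem_filter, Finset.mem_univ, true_and, Finset.mem_erase, hF]
    tauto
  have h00 : uPoly n p 0 = X 0 ^ (p 0 + p 1) * ∏ j ∈ F, X j ^ p 1 := by
    rw [uPoly, if_pos h0v, hF]
  have h11 : uPoly n p 1 = X 1 ^ (p 0 + p 1) * ∏ j ∈ F, X j ^ p 0 := by
    rw [uPoly, if_neg (by rw [h1v]; omega), if_pos h1v, hF]
  have hui : ∀ i : Fin n, 2 ≤ (i : ℕ) → uPoly n p i =
      -(X 0 ^ p i * X 1 ^ (p 1 + p i) * ∏ j ∈ F.erase i, X j ^ p i) := by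
    intro i hi
    rw [uPoly, if_neg (by omega), if_neg (by omega), hfilter i]
  refine ⟨?_, ?_, ?_, ?_⟩
  · show Ideal.Quotient.mk (BIdl n p lam) (uPoly n p 0) *
      Ideal.Quotient.mk (BIdl n p lam) (uPoly n p 1) =
      Ideal.Quotient.mk (BIdl n p lam) (∏ k : Fin n, X k) ^ (p 0 + p 1)
    rw [← map_mul, ← map_pow]
    congr 1
    rw [h00, h11, hprodU, Finset.prod_pow, Finset.prod_pow]
    ring
  · intro i hi
    have hQ : (X i : BPoly n) * ∏ k ∈ F.erase i, X k = ∏ k ∈ F, X k :=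
      Finset.mul_prod_erase F _ (hiF i hi)
    show Ideal.Quotient.mk (BIdl n p lam) (uPoly n p 0) *
      Ideal.Quotient.mk (BIdl n p lam) (uPoly n p i) =
      Ideal.Quotient.mk (BIdl n p lam) (∏ k : Fin n, X k) ^ p 1 *
        (lam i • Ideal.Quotient.mk (BIdl n p lam) (uPoly n p i) +
          Ideal.Quotient.mk (BIdl n p lam) (∏ k : Fin n, X k) ^ p i)
    rw [hs, ← map_pow, ← map_pow, ← map_add, ← map_mul, ← map_mul, Ideal.Quotient.eq]
    have mem : (-(X 0 ^ (p 1 + p i) * X 1 ^ (p 1 + p i) * X i ^ p 1 *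
        (∏ k ∈ F.erase i, (X k : BPoly n)) ^ (p 1 + p i))) *
        (X i ^ p i + X 0 ^ p 0 - C (lam i) * X 1 ^ p 1) ∈ BIdl n p lam :=
      Ideal.mul_mem_left _ _ (hg i hi)
    convert mem using 1
    rw [h00, hui i hi, hprodU, Finset.prod_pow, Finset.prod_pow, ← hQ]
    ring
  · intro i hi
    have hQ : (X i : BPoly n) * ∏ k ∈ F.erase i, X k = ∏ k ∈ F, X k :=
      Finset.mul_prod_erase F _ (hiF i hi)
    show Ideal.Quotient.mk (BIdl n p lam) (uPoly n p 1) *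
      (lam i • Ideal.Quotient.mk (BIdl n p lam) (uPoly n p i) +
        Ideal.Quotient.mk (BIdl n p lam) (∏ k : Fin n, X k) ^ p i) =
      Ideal.Quotient.mk (BIdl n p lam) (∏ k : Fin n, X k) ^ p 0 *
        Ideal.Quotient.mk (BIdl n p lam) (uPoly n p i)
    rw [hs, ← map_pow, ← map_pow, ← map_add, ← map_mul, ← map_mul, Ideal.Quotient.eq]
    have mem : (X 0 ^ p i * X 1 ^ (p 0 + p 1 + p i) * X i ^ p 0 *
        (∏ k ∈ F.erase i, (X k : BPoly n)) ^ (p 0 + p i)) *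
        (X i ^ p i + X 0 ^ p 0 - C (lam i) * X 1 ^ p 1) ∈ BIdl n p lam :=
      Ideal.mul_mem_left _ _ (hg i hi)
    convert mem using 1
    rw [h11, hui i hi, hprodU, Finset.prod_pow, Finset.prod_pow, ← hQ]
    ring
  · intro i j hi hij
    have hj : 2 ≤ (j : ℕ) := by omega
    have hne : j ≠ i := by
      intro h; rw [h] at hij; omega
    have hjFi : j ∈ F.erase i := Finset.mem_erase.mpr ⟨hne, hiF j hj⟩
    have hiFj : i ∈ F.erase j := Finset.mem_erase.mpr ⟨fun h => hne h.symm, hiF i hi⟩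
    have hQi : (X j : BPoly n) * ∏ k ∈ (F.erase i).erase j, X k = ∏ k ∈ F.erase i, X k :=
      Finset.mul_prod_erase (F.erase i) _ hjFi
    have hQj : (X i : BPoly n) * ∏ k ∈ (F.erase i).erase j, X k = ∏ k ∈ F.erase j, X k := by
      rw [Finset.erase_right_comm]
      exact Finset.mul_prod_erase (F.erase j) _ hiFj
    have hQ : (X i : BPoly n) * ∏ k ∈ F.erase i, X k = ∏ k ∈ F, X k :=
      Finset.mul_prod_erase F _ (hiF i hi)
    show Ideal.Quotient.mk (BIdl n p lam) (uPoly n p i) *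
      (lam j • Ideal.Quotient.mk (BIdl n p lam) (uPoly n p j) +
        Ideal.Quotient.mk (BIdl n p lam) (∏ k : Fin n, X k) ^ p j) =
      Ideal.Quotient.mk (BIdl n p lam) (uPoly n p j) *
        (lam i • Ideal.Quotient.mk (BIdl n p lam) (uPoly n p i) +
          Ideal.Quotient.mk (BIdl n p lam) (∏ k : Fin n, X k) ^ p i)
    rw [hs, hs, ← map_pow, ← map_pow, ← map_add, ← map_add, ← map_mul, ← map_mul,
      Ideal.Quotient.eq]
    have mem : (X 0 ^ (p i + p j) * X 1 ^ (p 1 + p i + p j) * X i ^ p j * X j ^ p i *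
          (∏ k ∈ (F.erase i).erase j, (X k : BPoly n)) ^ (p i + p j)) *
          (X i ^ p i + X 0 ^ p 0 - C (lam i) * X 1 ^ p 1) -
        (X 0 ^ (p i + p j) * X 1 ^ (p 1 + p i + p j) * X i ^ p j * X j ^ p i *
          (∏ k ∈ (F.erase i).erase j, (X k : BPoly n)) ^ (p i + p j)) *
          (X j ^ p j + X 0 ^ p 0 - C (lam j) * X 1 ^ p 1) ∈ BIdl n p lam :=
      sub_mem (Ideal.mul_mem_left _ _ (hg i hi)) (Ideal.mul_mem_left _ _ (hg j hj))
    convert mem using 1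
    rw [hui i hi, hui j hj, hprodU, Finset.prod_pow, Finset.prod_pow, ← hQ, ← hQi, ← hQj]
    ring
end
end

section
/- Set R := S^s. Then, as R-submodules of S: (i) for every integer 1 ≤ q ≤ p_1, S(q e_1)^s = R·(x_2^{p_2}(x_2x_3⋯x_n)^{p_1−q}) + R·x_1^{q}; (ii) for every integer 1 ≤ q ≤ p_2, S(q e_2)^s = R·(x_1^{p_1}(x_1x_3⋯x_n)^{p_2−q}) + R·x_2^{q}; (iii) for every 3 ≤ i ≤ n and every integer 1 ≤ q ≤ p_i, S(q e_i)^s = R·(x_2^{p_2}(x_1x_2⋯x̂_i⋯x_n)^{p_i−q}) + R·x_i^{q} (where x̂_i means the factor x_i is omitted from the product x_1x_2⋯x_n); (iv) S(c)^s = R·x_1^{p_1} + R·x_2^{p_2}. -/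
set_option synthInstance.maxHeartbeats 1000000
set_option maxHeartbeats 1000000

noncomputable section

open MvPolynomial

/-!
A graded piece of `S` is spanned by monomials. A monomial `x^m` of weight `q e_t + k s` lies in
`R · x_t^q` once `m_t ≥ q`, and in `R · x_h^{p_h} (∏_{a ≠ t} x_a)^d`, `d = p_t - q`, once
`m_h ≥ p_h + d` and `m_a ≥ d` for the remaining `a`, because the cofactor has weight in `ℤ s`.
Since the `λ_i` are distinct and nonzero, any two of the `x_i^{p_i}` span the same plane, so a
factor `x_a^{p_a}` can be traded for a combination of `x_b^{p_b}` and `x_c^{p_c}`; choosing the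
trades well moves every monomial into one of the two cases. What is left would have `m_t < q` and
`m_a < p_a + d` for all `a ≠ t`, and the relations of `L` (`m_a ≡ k` modulo `p_a`, with quotients
summing to zero) exclude this. Case (iv) is case (i) with `q = p_1`.
-/

namespace LGroup

variable {ι : Type} [DecidableEq ι] {p : ι → ℕ}

theorem nsmul_egen_eq_cgen (i : ι) : p i • egen p i = cgen p := by
  rw [egen, cgen, ← QuotientAddGroup.mk_nsmul, QuotientAddGroup.eq, ← natCast_zsmul,
    neg_add_eq_sub, ← neg_sub]
  exact AddSubgroup.neg_mem _ (AddSubgroup.subset_closure ⟨i, rfl⟩)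

variable [Fintype ι]

def lift {G : Type*} [AddCommGroup G] (v : Option ι → G)
    (hv : ∀ i, (p i : ℤ) • v (some i) = v none) : LGroup ι p →+ G :=
  QuotientAddGroup.lift _ (Fintype.linearCombination ℤ v).toAddMonoidHom <| by
    rw [LRel, AddSubgroup.closure_le]
    rintro _ ⟨i, rfl⟩
    rw [SetLike.mem_coe, AddMonoidHom.mem_ker, LinearMap.toAddMonoidHom_coe, map_sub, map_zsmul,
      Fintype.linearCombination_apply_single, Fintype.linearCombination_apply_single, one_smul,
      one_smul, hv, sub_self]

theorem lift_egen {G : Type*} [AddCommGroup G] (v : Option ι → G)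
    (hv : ∀ i, (p i : ℤ) • v (some i) = v none) (i : ι) : lift v hv (egen p i) = v (some i) := by
  simp [lift, egen, Fintype.linearCombination_apply_single]

theorem dvd_sub_of_sum_zsmul_egen_eq {f g : ι → ℤ}
    (h : ∑ i, f i • egen p i = ∑ i, g i • egen p i) (a : ι) : (p a : ℤ) ∣ f a - g a := by
  let v : Option ι → ZMod (p a) := fun o => if o = some a then 1 else 0
  have hv : ∀ i, (p i : ℤ) • v (some i) = v none := fun i => by
    by_cases hi : i = a <;> simp [v, hi]
  have := congrArg (lift v hv) h
  simp only [map_sum, map_zsmul, lift_egen, v, Option.some_inj, smul_ite, smul_zero,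
    Finset.sum_ite_eq', Finset.mem_univ, if_true, zsmul_eq_mul, mul_one] at this
  rw [← ZMod.intCast_zmod_eq_zero_iff_dvd, Int.cast_sub, this, sub_self]

theorem exists_eq_add_mul_of_sum_zsmul_egen_eq (hp : ∀ i, p i ≠ 0) {f g : ι → ℤ}
    (h : ∑ i, f i • egen p i = ∑ i, g i • egen p i) :
    ∃ c : ι → ℤ, (∀ i, f i = g i + p i * c i) ∧ ∑ i, c i = 0 := by
  choose c hc using dvd_sub_of_sum_zsmul_egen_eq h
  refine ⟨c, fun i => by linarith [hc i], ?_⟩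
  let v : Option ι → ℚ := fun o => o.elim 1 fun i => (p i : ℚ)⁻¹
  have hv : ∀ i, (p i : ℤ) • v (some i) = v none := fun i => by
    simp [v, hp i]
  have := congrArg (lift v hv) h
  simp only [map_sum, map_zsmul, lift_egen, v, Option.elim_some, zsmul_eq_mul] at this
  have key : ∑ i, (c i : ℚ) = 0 := by
    rw [← sub_eq_zero.mpr this, ← Finset.sum_sub_distrib]
    refine Finset.sum_congr rfl fun i _ => ?_
    rw [← sub_mul, ← Int.cast_sub, hc i]
    push_cast
    field_simp [hp i]
  exact_mod_cast key

end LGroup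

/- Either sign of `k` forces `c t ≤ -1`; then `m t ≥ 0` forces `k ≥ d`, which makes every other
`c a ≤ 0`, against `∑ c = 0`. -/
theorem exists_add_le_of_eq_add_mul {ι : Type*} [Fintype ι] [DecidableEq ι] {p : ι → ℕ}
    (hp : ∀ i, p i ≠ 0) {t h : ι} (hht : h ≠ t) {q d : ℕ} (hqd : q + d = p t) {k : ℤ}
    {m : ι → ℕ} {c : ι → ℤ} (hc : ∑ i, c i = 0)
    (hm : ∀ i, (m i : ℤ) = (if i = t then (q : ℤ) else 0) + k + p i * c i) (hmt : m t < q) :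
    ∃ a ≠ t, p a + d ≤ m a := by
  by_contra! hsmall
  have hpos : ∀ i, (0 : ℤ) < p i := fun i => by have := hp i; omega
  have hsum : c t + ∑ i ∈ Finset.univ.erase t, c i = 0 := by
    rw [Finset.add_sum_erase _ _ (Finset.mem_univ t), hc]
  have hmt' := hm t
  rw [if_pos rfl] at hmt'
  have hct : c t ≤ -1 := by
    rcases le_or_gt 0 k with hk | hk
    · nlinarith [hpos t]
    · have hca : ∀ i ∈ Finset.univ.erase t, 1 ≤ c i := fun i hi => by
        have := hm i
        rw [if_neg (Finset.ne_of_mem_erase hi)] at this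
        nlinarith [hpos i]
      have := Finset.single_le_sum (fun i hi => zero_le_one.trans (hca i hi))
        (Finset.mem_erase.mpr ⟨hht, Finset.mem_univ h⟩)
      linarith [hca h (Finset.mem_erase.mpr ⟨hht, Finset.mem_univ h⟩)]
  have hkd : (d : ℤ) ≤ k := by
    have : (p t : ℤ) = q + d := by exact_mod_cast hqd.symm
    nlinarith
  have hca : ∀ i ∈ Finset.univ.erase t, c i ≤ 0 := fun i hi => by
    have hit := Finset.ne_of_mem_erase hi
    have hmi := hm i
    rw [if_neg hit] at hmi
    nlinarith [hpos i, hsmall i hit]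
  linarith [Finset.sum_nonpos hca]

theorem span_pair_le_span_pair {K V : Type*} [Field K] [AddCommGroup V] [Module K V]
    {u v y z : V} {a b c d : K} (hy : y = a • u + b • v) (hz : z = c • u + d • v)
    (hdet : a * d - b * c ≠ 0) : Submodule.span K {u, v} ≤ Submodule.span K {y, z} := by
  rw [Submodule.span_le, Set.insert_subset_iff, Set.singleton_subset_iff]
  set D := a * d - b * c
  constructor
  · refine Submodule.mem_span_pair.mpr ⟨d / D, -b / D, ?_⟩
    rw [hy, hz]
    match_scalars <;> field_simp <;> simp only [D] <;> ring
  · refine Submodule.mem_span_pair.mpr ⟨-c / D, a / D, ?_⟩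
    rw [hy, hz]
    match_scalars <;> field_simp <;> simp only [D] <;> ring

theorem Subalgebra.mem_span_pair_iff {K A : Type*} [CommSemiring K] [Semiring A] [Algebra K A]
    (R : Subalgebra K A) {x y w : A} :
    w ∈ Submodule.span R {x, y} ↔ ∃ r₁ ∈ R, ∃ r₂ ∈ R, w = r₁ * x + r₂ * y := by
  rw [Submodule.mem_span_pair]
  constructor
  · rintro ⟨r₁, r₂, rfl⟩
    exact ⟨r₁, r₁.2, r₂, r₂.2, rfl⟩
  · rintro ⟨r₁, h₁, r₂, h₂, rfl⟩
    exact ⟨⟨r₁, h₁⟩, ⟨r₂, h₂⟩, rfl⟩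

theorem Finsupp.exists_eq_add_single {ι : Type*} {m : ι →₀ ℕ} {a : ι} {k : ℕ} (hk : k ≤ m a) :
    ∃ m', m = m' + Finsupp.single a k :=
  ⟨m - Finsupp.single a k, (tsub_add_cancel_of_le (Finsupp.single_le_iff.mpr hk)).symm⟩

theorem Finsupp.sum_add_single_apply {ι M : Type*} [DecidableEq ι] [AddCommMonoid M] (s : Finset ι)
    (m : ι →₀ M) (a : ι) (k : M) :
    ∑ b ∈ s, (m + Finsupp.single a k) b = ∑ b ∈ s, m b + if a ∈ s then k else 0 := by
  simp only [Finsupp.coe_add, Pi.add_apply, Finset.sum_add_distrib, Finsupp.single_apply,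
    Finset.sum_ite_eq]

section Grading

variable {n : ℕ} (p : Fin n → ℕ)

def wtHom : (Fin n →₀ ℕ) →+ LGroup (Fin n) p where
  toFun := wtB p
  map_zero' := by simp [wtB]
  map_add' u v := by simp [wtB, add_smul, Finset.sum_add_distrib]

theorem wtHom_apply (m : Fin n →₀ ℕ) : wtHom p m = wtB p m := rfl

theorem wtB_add (u v : Fin n →₀ ℕ) : wtB p (u + v) = wtB p u + wtB p v := map_add (wtHom p) u v

theorem wtB_single (i : Fin n) (k : ℕ) : wtB p (Finsupp.single i k) = k • egen p i := by
  simp [wtB, Finsupp.single_apply]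

theorem wtB_add_single_self (m : Fin n →₀ ℕ) (a : Fin n) :
    wtB p (m + Finsupp.single a (p a)) = wtB p m + cgen p := by
  rw [wtB_add, wtB_single, LGroup.nsmul_egen_eq_cgen]

theorem polyCompB_eq_restrictSupport (y : LGroup (Fin n) p) :
    polyCompB p y = restrictSupport ℂ {m | wtB p m = y} := by
  ext f
  simp only [mem_restrictSupport_iff, Set.subset_def, Finset.mem_coe, mem_support_iff]
  rfl

variable [NeZero n] (lam : Fin n → ℂ)

def monB (m : Fin n →₀ ℕ) : BAlg n p lam := Ideal.Quotient.mk (BIdl n p lam) (monomial m 1)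

theorem monB_add (u v : Fin n →₀ ℕ) : monB p lam (u + v) = monB p lam u * monB p lam v := by
  rw [monB, monB, monB, ← map_mul, monomial_mul, one_mul]

theorem mk_X_pow (i : Fin n) (k : ℕ) :
    Ideal.Quotient.mk (BIdl n p lam) (X i ^ k) = monB p lam (Finsupp.single i k) := by
  rw [X_pow_eq_monomial, monB]

theorem SCompB_eq_span (y : LGroup (Fin n) p) :
    SCompB n p lam y = Submodule.span ℂ
      (monB p lam '' {m | wtB p m = y}) := by
  rw [SCompB, polyCompB_eq_restrictSupport, restrictSupport_eq_span, Submodule.map_span,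
    ← Set.image_comp]
  rfl

theorem monB_mem_SCompB (m : Fin n →₀ ℕ) :
    monB p lam m ∈ SCompB n p lam (wtB p m) := by
  rw [SCompB_eq_span]
  exact Submodule.subset_span ⟨m, rfl, rfl⟩

theorem SCompB_mul_le (y z : LGroup (Fin n) p) :
    SCompB n p lam y * SCompB n p lam z ≤ SCompB n p lam (y + z) := by
  rw [SCompB_eq_span, SCompB_eq_span, Submodule.span_mul_span, Submodule.span_le]
  rintro _ ⟨_, ⟨u, rfl, rfl⟩, _, ⟨v, rfl, rfl⟩, rfl⟩
  simpa only [monB_add, wtB_add, SetLike.mem_coe] using monB_mem_SCompB p lam (u + v)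

theorem SCompB_le_SVerB (x : LGroup (Fin n) p) (k : ℤ) :
    SCompB n p lam (k • x) ≤ SVerB n p lam x :=
  le_iSup (fun k : ℤ => SCompB n p lam (k • x)) k

theorem SVerB_mul_SCompB_le (x y : LGroup (Fin n) p) (j : ℤ) :
    SVerB n p lam x * SCompB n p lam (y + j • x) ≤ SShiftB n p lam y x := by
  rw [SVerB, Submodule.iSup_mul]
  refine iSup_le fun k => (SCompB_mul_le p lam _ _).trans ?_
  rw [show k • x + (y + j • x) = y + (k + j) • x by rw [add_zsmul]; abel]
  exact le_iSup (fun k : ℤ => SCompB n p lam (y + k • x)) (k + j)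

theorem SShiftB_le_iff (x y : LGroup (Fin n) p) (M : Submodule ℂ (BAlg n p lam)) :
    SShiftB n p lam y x ≤ M ↔ ∀ (k : ℤ) (m : Fin n →₀ ℕ), wtB p m = y + k • x →
      monB p lam m ∈ M := by
  simp only [SShiftB, iSup_le_iff, SCompB_eq_span, Submodule.span_le, Set.image_subset_iff]
  rfl

end Grading

section Reduction

variable {n : ℕ} {p : Fin n → ℕ}

theorem exists_add_le_of_wtB_eq (hp : ∀ i, p i ≠ 0) {t h : Fin n} (hht : h ≠ t) {q d : ℕ}
    (hqd : q + d = p t) {k : ℤ} {m : Fin n →₀ ℕ}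
    (hw : wtB p m = q • egen p t + k • ∑ i, egen p i) (hmt : m t < q) :
    ∃ a ≠ t, p a + d ≤ m a := by
  have hsum : ∑ i, (m i : ℤ) • egen p i
      = ∑ i, ((if i = t then (q : ℤ) else 0) + k) • egen p i := by
    simp only [natCast_zsmul]
    rw [← wtB, hw]
    simp only [add_zsmul, Finset.sum_add_distrib, ite_smul, zero_smul, Finset.sum_ite_eq',
      Finset.mem_univ, if_true, natCast_zsmul]
    rw [Finset.sum_zsmul]
  obtain ⟨c, hc, hc0⟩ := LGroup.exists_eq_add_mul_of_sum_zsmul_egen_eq hp hsum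
  exact exists_add_le_of_eq_add_mul hp hht hqd hc0 hc hmt

variable (p) in
def genExp (t h : Fin n) (d : ℕ) : Fin n →₀ ℕ :=
  Finsupp.single h (p h) + d • ∑ a ∈ Finset.univ.erase t, Finsupp.single a 1

theorem genExp_le {t h : Fin n} (hth : t ≠ h) {d : ℕ} {m : Fin n →₀ ℕ} (hmh : p h + d ≤ m h)
    (hm : ∀ a, a ≠ t → a ≠ h → d ≤ m a) : genExp p t h d ≤ m := by
  intro a
  simp only [genExp, Finsupp.coe_add, Finsupp.coe_smul, Finsupp.coe_finsetSum, Pi.add_apply,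
    Pi.smul_apply, Finset.sum_apply, Finsupp.single_apply, smul_eq_mul]
  by_cases hah : a = h
  · subst hah
    simp [Ne.symm hth, hmh]
  · by_cases hat : a = t
    · subst hat
      simp [hth.symm]
    · simp [Ne.symm hah, hat, hm a hat hah]

theorem wtB_genExp {t h : Fin n} {q d : ℕ} (hqd : q + d = p t) :
    wtB p (genExp p t h d) = q • egen p t + (d : ℤ) • ∑ i, egen p i := by
  rw [genExp, ← wtHom_apply, map_add, map_nsmul, map_sum]
  simp only [wtHom_apply, wtB_single, one_smul, LGroup.nsmul_egen_eq_cgen,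
    Finset.sum_erase_eq_sub (Finset.mem_univ t)]
  rw [← LGroup.nsmul_egen_eq_cgen t, ← hqd, natCast_zsmul, add_nsmul, nsmul_sub]
  abel

theorem monomial_genExp (t h : Fin n) (d : ℕ) :
    (monomial (genExp p t h d) 1 : BPoly n) = X h ^ p h * (∏ a ∈ Finset.univ.erase t, X a) ^ d := by
  rw [genExp, ← one_mul (1 : ℂ), ← monomial_mul, ← one_pow d, ← monomial_pow, monomial_sum_one,
    X_pow_eq_monomial, one_pow]
  rfl

variable [NeZero n] {lam : Fin n → ℂ}

variable (n p lam) in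
def PowersSpannedByAnyTwo : Prop :=
  ∀ b c : Fin n, b ≠ c → ∀ a, Ideal.Quotient.mk (BIdl n p lam) (X a ^ p a) ∈
    Submodule.span ℂ {Ideal.Quotient.mk (BIdl n p lam) (X b ^ p b),
      Ideal.Quotient.mk (BIdl n p lam) (X c ^ p c)}

theorem monB_add_single_mem {M : Submodule ℂ (BAlg n p lam)} {m : Fin n →₀ ℕ} {a b c : Fin n}
    (habc : Ideal.Quotient.mk (BIdl n p lam) (X a ^ p a) ∈
      Submodule.span ℂ {Ideal.Quotient.mk (BIdl n p lam) (X b ^ p b),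
        Ideal.Quotient.mk (BIdl n p lam) (X c ^ p c)})
    (hb : monB p lam (m + Finsupp.single b (p b)) ∈ M)
    (hc : monB p lam (m + Finsupp.single c (p c)) ∈ M) :
    monB p lam (m + Finsupp.single a (p a)) ∈ M := by
  obtain ⟨β, γ, hβγ⟩ := Submodule.mem_span_pair.mp habc
  rw [monB_add, ← mk_X_pow] at hb hc ⊢
  rw [← hβγ, mul_add, mul_smul_comm, mul_smul_comm]
  exact M.add_mem (M.smul_mem β hb) (M.smul_mem γ hc)

variable (M : Submodule ℂ (BAlg n p lam)) {y : LGroup (Fin n) p} {t h : Fin n} {q d : ℕ}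

/- Trading `x_h^{p_h}` for a combination of `x_t^{p_t}` and `x_a^{p_a}`, where `m_a < d`, lowers
`m_h` and keeps `m_a` below `p_a + d`. -/
theorem monB_mem_of_forall_lt (hp : ∀ i, p i ≠ 0) (hspan : PowersSpannedByAnyTwo n p lam)
    (hth : t ≠ h) (hqt : q ≤ p t)
    (hterm : ∀ m, wtB p m = y → m t < q → ∃ a ≠ t, p a + d ≤ m a)
    (hMt : ∀ m, wtB p m = y → q ≤ m t → monB p lam m ∈ M)
    (hME : ∀ m, wtB p m = y → genExp p t h d ≤ m → monB p lam m ∈ M)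
    (m : Fin n →₀ ℕ) (hw : wtB p m = y) (hlt : ∀ a, a ≠ t → a ≠ h → m a < p a + d) :
    monB p lam m ∈ M := by
  induction hN : m h using Nat.strong_induction_on generalizing m with
  | _ N ih =>
  by_cases hmt : q ≤ m t
  · exact hMt m hw hmt
  by_cases hsmall : p h ≤ m h ∧ ∃ a, a ≠ t ∧ a ≠ h ∧ m a < d
  · obtain ⟨hph, a, hat, hah, had⟩ := hsmall
    obtain ⟨m, rfl⟩ := Finsupp.exists_eq_add_single hph
    have hw' : ∀ b, wtB p (m + Finsupp.single b (p b)) = y := fun b => by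
      rw [wtB_add_single_self, ← hw, wtB_add_single_self]
    have hval : ∀ b, b ≠ h → (m + Finsupp.single h (p h)) b = m b := fun b hb => by
      rw [Finsupp.add_apply, Finsupp.single_eq_of_ne hb, add_zero]
    rw [hval a hah] at had
    refine monB_add_single_mem (hspan t a (Ne.symm hat) h) (hMt _ (hw' t) ?_) ?_
    · rw [Finsupp.add_apply, Finsupp.single_eq_same]
      omega
    refine ih _ ?_ _ (hw' a) ?_ rfl
    · rw [← hN, Finsupp.add_apply, Finsupp.add_apply, Finsupp.single_eq_same,
        Finsupp.single_eq_of_ne (Ne.symm hah)]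
      have := hp h
      omega
    · intro b hbt hbh
      have := hlt b hbt hbh
      rw [hval b hbh] at this
      rw [Finsupp.add_apply, Finsupp.single_apply]
      split_ifs with hab
      · subst hab
        omega
      · omega
  by_cases hbig : p h + d ≤ m h
  · refine hME m hw (genExp_le hth hbig fun a hat hah => ?_)
    by_contra! had
    exact hsmall ⟨(Nat.le_add_right _ _).trans hbig, a, hat, hah, had⟩
  · obtain ⟨a, hat, ha⟩ := hterm m hw (not_le.mp hmt)
    rcases eq_or_ne a h with rfl | hah
    · exact (hbig ha).elim
    · exact ((hlt a hat hah).not_ge ha).elim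

/- Trading `x_a^{p_a}`, where `m_a ≥ p_a + d`, for a combination of `x_t^{p_t}` and `x_h^{p_h}`
lowers the sum of the exponents away from `h`. -/
theorem monB_mem_of_wtB_eq (hp : ∀ i, p i ≠ 0) (hspan : PowersSpannedByAnyTwo n p lam)
    (hth : t ≠ h) (hqt : q ≤ p t)
    (hterm : ∀ m, wtB p m = y → m t < q → ∃ a ≠ t, p a + d ≤ m a)
    (hMt : ∀ m, wtB p m = y → q ≤ m t → monB p lam m ∈ M)
    (hME : ∀ m, wtB p m = y → genExp p t h d ≤ m → monB p lam m ∈ M)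
    (m : Fin n →₀ ℕ) (hw : wtB p m = y) : monB p lam m ∈ M := by
  induction hN : ∑ b ∈ Finset.univ.erase h, m b using Nat.strong_induction_on
    generalizing m with
  | _ N ih =>
  by_cases hmt : q ≤ m t
  · exact hMt m hw hmt
  by_cases hlarge : ∃ a, a ≠ t ∧ a ≠ h ∧ p a + d ≤ m a
  · obtain ⟨a, hat, hah, ha⟩ := hlarge
    obtain ⟨m, rfl⟩ := Finsupp.exists_eq_add_single ((Nat.le_add_right _ _).trans ha)
    have hw' : ∀ b, wtB p (m + Finsupp.single b (p b)) = y := fun b => by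
      rw [wtB_add_single_self, ← hw, wtB_add_single_self]
    refine monB_add_single_mem (hspan t h hth a) (hMt _ (hw' t) ?_) (ih _ ?_ _ (hw' h) rfl)
    · rw [Finsupp.add_apply, Finsupp.single_eq_same]
      omega
    · rw [← hN, Finsupp.sum_add_single_apply, Finsupp.sum_add_single_apply, if_neg (by simp),
        if_pos (by simp [hah])]
      have := hp a
      omega
  · push Not at hlarge
    exact monB_mem_of_forall_lt M hp hspan hth hqt hterm hMt hME m hw hlarge

end Reduction

section Relations

variable {n : ℕ} [NeZero n] (p : Fin n → ℕ) (lam : Fin n → ℂ)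

theorem Fin.val_one_of_two_le (hn : 2 ≤ n) : ((1 : Fin n) : ℕ) = 1 := by
  rw [Fin.val_one', Nat.mod_eq_of_lt hn]

theorem Fin.zero_ne_one_of_two_le (hn : 2 ≤ n) : (0 : Fin n) ≠ 1 := fun h => by
  have := congrArg Fin.val h
  rw [Fin.val_one_of_two_le hn] at this
  simp at this

theorem Fin.ne_zero_and_ne_one_of_two_le {i : Fin n} (hi : 2 ≤ (i : ℕ)) : i ≠ 0 ∧ i ≠ 1 := by
  refine ⟨?_, ?_⟩ <;> rintro rfl
  · simp at hi
  · have := Nat.mod_le 1 n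
    rw [Fin.val_one'] at hi
    omega

theorem Fin.eq_zero_or_eq_one_or_two_le (hn : 2 ≤ n) (i : Fin n) :
    i = 0 ∨ i = 1 ∨ 2 ≤ (i : ℕ) := by
  rcases Nat.lt_or_ge (i : ℕ) 2 with hi | hi
  · interval_cases h : (i : ℕ)
    · exact Or.inl (Fin.ext h)
    · exact Or.inr (Or.inl (Fin.ext (h.trans (Fin.val_one_of_two_le hn).symm)))
  · exact Or.inr (Or.inr hi)

theorem mk_X_pow_of_two_le {a : Fin n} (ha : 2 ≤ (a : ℕ)) :
    Ideal.Quotient.mk (BIdl n p lam) (X a ^ p a)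
      = lam a • Ideal.Quotient.mk (BIdl n p lam) (X 1 ^ p 1)
        - Ideal.Quotient.mk (BIdl n p lam) (X 0 ^ p 0) := by
  have hrel : Ideal.Quotient.mk (BIdl n p lam) (X a ^ p a + X 0 ^ p 0 - C (lam a) * X 1 ^ p 1)
      = 0 := Ideal.Quotient.eq_zero_iff_mem.mpr (Ideal.subset_span ⟨a, ha, rfl⟩)
  rw [map_sub, map_add, map_mul, ← algebraMap_eq, Ideal.Quotient.mk_algebraMap,
    ← Algebra.smul_def] at hrel
  rw [← sub_eq_zero, ← hrel]
  abel

theorem powersSpannedByAnyTwo (hn : 2 ≤ n) (hlam0 : ∀ i : Fin n, 2 ≤ (i : ℕ) → lam i ≠ 0)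
    (hlamd : ∀ i j : Fin n, 2 ≤ (i : ℕ) → 2 ≤ (j : ℕ) → i ≠ j → lam i ≠ lam j) :
    PowersSpannedByAnyTwo n p lam := by
  set y : Fin n → BAlg n p lam := fun i => Ideal.Quotient.mk (BIdl n p lam) (X i ^ p i)
  let α : Fin n → ℂ := fun i => if i = 0 then 1 else if i = 1 then 0 else -1
  let β : Fin n → ℂ := fun i => if i = 0 then 0 else if i = 1 then 1 else lam i
  have h10 := (Fin.zero_ne_one_of_two_le hn).symm
  have hne := @Fin.ne_zero_and_ne_one_of_two_le n _
  have hrepr : ∀ i, y i = α i • y 0 + β i • y 1 := fun i => by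
    rcases Fin.eq_zero_or_eq_one_or_two_le hn i with rfl | rfl | hi
    · simp [α, β]
    · simp [α, β, h10]
    · simp only [y, α, β, if_neg (hne hi).1, if_neg (hne hi).2, mk_X_pow_of_two_le p lam hi]
      module
  have hdet : ∀ b c, b ≠ c → α b * β c - β b * α c ≠ 0 := fun b c hbc => by
    rcases Fin.eq_zero_or_eq_one_or_two_le hn b with rfl | rfl | hb <;>
      rcases Fin.eq_zero_or_eq_one_or_two_le hn c with rfl | rfl | hc
    · exact absurd rfl hbc
    · simp [α, β, h10]
    · simp [α, β, hne hc, hlam0 c hc]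
    · simp [α, β, h10]
    · exact absurd rfl hbc
    · simp [α, β, h10, hne hc]
    · simp [α, β, hne hb, hlam0 b hb]
    · simp [α, β, h10, hne hb]
    · simp [α, β, hne hb, hne hc, neg_add_eq_zero, hlamd c b hc hb (Ne.symm hbc)]
  intro b c hbc a
  rw [show Ideal.Quotient.mk (BIdl n p lam) (X a ^ p a) = y a from rfl, hrepr a]
  refine span_pair_le_span_pair (hrepr b) (hrepr c) (hdet b c hbc) ?_
  exact Submodule.add_mem _ (Submodule.smul_mem _ _ (Submodule.subset_span (by simp)))
    (Submodule.smul_mem _ _ (Submodule.subset_span (by simp)))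

end Relations

section Generators

variable {n : ℕ} [NeZero n] {p : Fin n → ℕ} {lam : Fin n → ℂ} {R : Subalgebra ℂ (BAlg n p lam)}

theorem monB_mem_of_wtB_eq_zsmul (hR : Subalgebra.toSubmodule R = SVerB n p lam (∑ i, egen p i))
    {m : Fin n →₀ ℕ} {k : ℤ} (hw : wtB p m = k • ∑ i, egen p i) : monB p lam m ∈ R := by
  change monB p lam m ∈ Subalgebra.toSubmodule R
  rw [hR]
  exact SCompB_le_SVerB p lam _ k (hw ▸ monB_mem_SCompB p lam m)

theorem monB_mem_span_singleton (hR : Subalgebra.toSubmodule R = SVerB n p lam (∑ i, egen p i))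
    {u m : Fin n →₀ ℕ} (hum : u ≤ m) {k : ℤ} (hw : wtB p m = wtB p u + k • ∑ i, egen p i) :
    monB p lam m ∈ Submodule.span R {monB p lam u} := by
  obtain ⟨m, rfl⟩ : ∃ m', m = m' + u := ⟨m - u, (tsub_add_cancel_of_le hum).symm⟩
  rw [wtB_add, add_comm] at hw
  rw [monB_add]
  exact Submodule.mem_span_singleton.mpr
    ⟨⟨_, monB_mem_of_wtB_eq_zsmul hR (add_left_cancel hw)⟩, rfl⟩

theorem mul_monB_mem_SShiftB (hR : Subalgebra.toSubmodule R = SVerB n p lam (∑ i, egen p i))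
    {r : BAlg n p lam} (hr : r ∈ R) {y : LGroup (Fin n) p} {u : Fin n →₀ ℕ} {j : ℤ}
    (hu : wtB p u = y + j • ∑ i, egen p i) :
    r * monB p lam u ∈ SShiftB n p lam y (∑ i, egen p i) := by
  refine SVerB_mul_SCompB_le p lam _ _ j (Submodule.mul_mem_mul ?_ (hu ▸ monB_mem_SCompB p lam u))
  rw [← hR]
  exact hr

theorem SShiftB_eq_span_pair (hp : ∀ i, p i ≠ 0) (hspan : PowersSpannedByAnyTwo n p lam)
    (hR : Subalgebra.toSubmodule R = SVerB n p lam (∑ i, egen p i)) {t h : Fin n} (hth : t ≠ h)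
    {q d : ℕ} (hqd : q + d = p t) :
    SShiftB n p lam (q • egen p t) (∑ i, egen p i) = (Submodule.span R
      {Ideal.Quotient.mk (BIdl n p lam) (X h ^ p h * (∏ a ∈ Finset.univ.erase t, X a) ^ d),
        Ideal.Quotient.mk (BIdl n p lam) (X t ^ q)}).restrictScalars ℂ := by
  rw [← monomial_genExp, mk_X_pow]
  change _ = (Submodule.span R {monB p lam (genExp p t h d), _}).restrictScalars ℂ
  apply le_antisymm
  · refine (SShiftB_le_iff p lam _ _ _).mpr fun k m hw => ?_
    refine monB_mem_of_wtB_eq _ hp hspan hth (hqd ▸ Nat.le_add_right q d)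
      (fun m hw hmt => exists_add_le_of_wtB_eq hp hth.symm hqd hw hmt) (fun m hw hmt => ?_)
      (fun m hw hle => ?_) m hw
    · refine Submodule.span_mono (Set.subset_insert _ _) ?_
      exact monB_mem_span_singleton hR (Finsupp.single_le_iff.mpr hmt) (by rw [hw, wtB_single])
    · refine Submodule.span_mono (Set.singleton_subset_iff.mpr (Set.mem_insert _ _)) ?_
      refine monB_mem_span_singleton hR hle (k := k - d) ?_
      rw [hw, wtB_genExp hqd, sub_zsmul]
      abel
  · intro w hw
    obtain ⟨r₁, r₂, rfl⟩ := Submodule.mem_span_pair.mp hw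
    refine Submodule.add_mem _ (mul_monB_mem_SShiftB hR r₁.2 (j := d) (wtB_genExp hqd))
      (mul_monB_mem_SShiftB hR r₂.2 (j := 0) ?_)
    rw [wtB_single, zero_smul, add_zero]

end Generators

/-- With `R = S^s`, the shifted modules `S(qeⱼ)^s` and `S(c)^s` are
`2`-generated `R`-submodules of `S`, with the explicit generators below. -/
theorem shifted_modules_two_generated (n : ℕ) (hn : 3 ≤ n) [NeZero n] (p : Fin n → ℕ)
    (hp : ∀ i, 2 ≤ p i) (lam : Fin n → ℂ)
    (hlam0 : ∀ i : Fin n, 2 ≤ (i : ℕ) → lam i ≠ 0)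
    (hlamd : ∀ i j : Fin n, 2 ≤ (i : ℕ) → 2 ≤ (j : ℕ) → i ≠ j → lam i ≠ lam j)
    (R : Subalgebra ℂ (BAlg n p lam))
    (hR : Subalgebra.toSubmodule R = SVerB n p lam (∑ i, egen p i)) :
    (∀ q : ℕ, 1 ≤ q → q ≤ p 0 → ∀ w : BAlg n p lam,
      (w ∈ SShiftB n p lam (q • egen p 0) (∑ i, egen p i) ↔
        ∃ r₁ ∈ R, ∃ r₂ ∈ R,
          w = r₁ * Ideal.Quotient.mk (BIdl n p lam)
                (X 1 ^ p 1 * (∏ k ∈ Finset.univ.erase (0 : Fin n), X k) ^ (p 0 - q)) +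
              r₂ * Ideal.Quotient.mk (BIdl n p lam) (X 0 ^ q))) ∧
    (∀ q : ℕ, 1 ≤ q → q ≤ p 1 → ∀ w : BAlg n p lam,
      (w ∈ SShiftB n p lam (q • egen p 1) (∑ i, egen p i) ↔
        ∃ r₁ ∈ R, ∃ r₂ ∈ R,
          w = r₁ * Ideal.Quotient.mk (BIdl n p lam)
                (X 0 ^ p 0 * (∏ k ∈ Finset.univ.erase (1 : Fin n), X k) ^ (p 1 - q)) +
              r₂ * Ideal.Quotient.mk (BIdl n p lam) (X 1 ^ q))) ∧
    (∀ i : Fin n, 2 ≤ (i : ℕ) → ∀ q : ℕ, 1 ≤ q → q ≤ p i → ∀ w : BAlg n p lam,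
      (w ∈ SShiftB n p lam (q • egen p i) (∑ i, egen p i) ↔
        ∃ r₁ ∈ R, ∃ r₂ ∈ R,
          w = r₁ * Ideal.Quotient.mk (BIdl n p lam)
                (X 1 ^ p 1 * (∏ k ∈ Finset.univ.erase i, X k) ^ (p i - q)) +
              r₂ * Ideal.Quotient.mk (BIdl n p lam) (X i ^ q))) ∧
    (∀ w : BAlg n p lam,
      (w ∈ SShiftB n p lam (cgen p) (∑ i, egen p i) ↔
        ∃ r₁ ∈ R, ∃ r₂ ∈ R,
          w = r₁ * Ideal.Quotient.mk (BIdl n p lam) (X 0 ^ p 0) +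
              r₂ * Ideal.Quotient.mk (BIdl n p lam) (X 1 ^ p 1))) := by
  have hp0 : ∀ i, p i ≠ 0 := fun i => by have := hp i; omega
  have h01 := Fin.zero_ne_one_of_two_le (n := n) (by omega)
  have hspan := powersSpannedByAnyTwo p lam (by omega) hlam0 hlamd
  have key : ∀ t h : Fin n, t ≠ h → ∀ q ≤ p t, ∀ w : BAlg n p lam,
      w ∈ SShiftB n p lam (q • egen p t) (∑ i, egen p i) ↔ ∃ r₁ ∈ R, ∃ r₂ ∈ R,
        w = r₁ * Ideal.Quotient.mk (BIdl n p lam)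
              (X h ^ p h * (∏ k ∈ Finset.univ.erase t, X k) ^ (p t - q)) +
            r₂ * Ideal.Quotient.mk (BIdl n p lam) (X t ^ q) := fun t h hth q hq w => by
    rw [SShiftB_eq_span_pair hp0 hspan hR hth (Nat.add_sub_cancel' hq),
      Submodule.restrictScalars_mem, Subalgebra.mem_span_pair_iff]
  refine ⟨fun q _ hq => key 0 1 h01 q hq, fun q _ hq => key 1 0 h01.symm q hq,
    fun i hi q _ hq => key i 1 (Fin.ne_zero_and_ne_one_of_two_le hi).2 q hq, fun w => ?_⟩
  rw [← LGroup.nsmul_egen_eq_cgen 0, key 0 1 h01 (p 0) le_rfl w, Nat.sub_self, pow_zero, mul_one]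
  constructor <;> rintro ⟨r₁, h₁, r₂, h₂, rfl⟩ <;> exact ⟨r₂, h₂, r₁, h₁, add_comm _ _⟩
end
end

section
/- Let T be the star-shaped labelled graph with one central vertex and v ≥ 2 arms, where arm i (1 ≤ i ≤ v) is a chain of n_i ≥ 1 vertices attached at one end to the center; the center carries the label −β with β ≥ 1, and the j-th vertex of arm i carries the label −α_{ij} with α_{ij} ≥ 2. Let Z denote the free abelian group on the vertex set, with symmetric bilinear pairing Y·W determined by E_k·E_k = (label of E_k) and, for k ≠ l, E_k·E_l = 1 if E_k and E_l are adjacent in T and 0 otherwise. Let Z_top := {W = ∑ a_k E_k : W ≠ 0, all a_k ≥ 0, and W·E_k ≤ 0 for every vertex E_k}. Then the cycle Z := ∑_k E_k (all coefficients equal to 1) is the least element of Z_top with respect to the componentwise order (in particular Z ∈ Z_top) if and only if β ≥ v. -/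
noncomputable section

/-- Vertices of the star-shaped graph: `none` is the central vertex, and
`some ⟨i, j⟩` is the `j`-th vertex of arm `i`. -/
abbrev StarVertex (v : ℕ) (narm : Fin v → ℕ) : Type :=
  Option ((i : Fin v) × Fin (narm i))

/-- Adjacency of the star-shaped tree: the center is adjacent to the first vertex of
each arm, and consecutive vertices of an arm are adjacent. -/
def starAdj {v : ℕ} {narm : Fin v → ℕ} :
    StarVertex v narm → StarVertex v narm → Prop
  | none, none => False
  | none, some ⟨_, j⟩ => (j : ℕ) = 0
  | some ⟨_, j⟩, none => (j : ℕ) = 0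
  | some ⟨i, j⟩, some ⟨i', j'⟩ =>
      i = i' ∧ ((j : ℕ) + 1 = (j' : ℕ) ∨ (j' : ℕ) + 1 = (j : ℕ))

/-- The label (self-intersection number) of each vertex: `−β` at the center and
`−α i j` on the arms. -/
def starLabel {v : ℕ} {narm : Fin v → ℕ} (β : ℕ) (α : (i : Fin v) → Fin (narm i) → ℕ) :
    StarVertex v narm → ℤ
  | none => -(β : ℤ)
  | some ⟨i, j⟩ => -(α i j : ℤ)

open Classical in
/-- The intersection matrix `M_T` of the labelled star-shaped tree. -/
def starMat {v : ℕ} {narm : Fin v → ℕ} (β : ℕ) (α : (i : Fin v) → Fin (narm i) → ℕ)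
    (x y : StarVertex v narm) : ℤ :=
  if x = y then starLabel β α x else if starAdj x y then 1 else 0

/-- The symmetric bilinear pairing `Y · W` on cycles determined by `M_T`. -/
def starDot {v : ℕ} {narm : Fin v → ℕ} (β : ℕ) (α : (i : Fin v) → Fin (narm i) → ℕ)
    (Y W : StarVertex v narm → ℤ) : ℤ :=
  ∑ x : StarVertex v narm, ∑ y : StarVertex v narm, Y x * W y * starMat β α x y

/-- `Z_top`: the nonzero effective cycles `W` with `W · E_k ≤ 0` for every vertex. -/
def starZtop {v : ℕ} {narm : Fin v → ℕ} (β : ℕ)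
    (α : (i : Fin v) → Fin (narm i) → ℕ) : Set (StarVertex v narm → ℤ) :=
  { W | W ≠ 0 ∧ (∀ x, 0 ≤ W x) ∧
      ∀ x : StarVertex v narm, starDot β α W (Pi.single x 1) ≤ 0 }

/-! If `W ∈ Z_top` vanishes at `x`, then `W · E_x = ∑_{a ∼ x} W a` is a sum of nonnegative terms
that is `≤ 0`, so `W` vanishes at the neighbours of `x`. The star being connected, every
`W ∈ Z_top` has all coefficients `≥ 1`, and `Z` is the least element of `Z_top` as soon as it lies
in it. Finally `Z · E_center = v - β`, while at an arm vertex, which has at most two neighbours,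
`Z · E_k ≤ 2 - α ≤ 0`. -/

open Finset

section StarTree

variable {v : ℕ} {narm : Fin v → ℕ}

lemma starAdj_symm {x y : StarVertex v narm} (h : starAdj x y) : starAdj y x := by
  rcases x with _ | ⟨i, j⟩ <;> rcases y with _ | ⟨i', j'⟩
  · exact h
  · exact h
  · exact h
  · obtain ⟨rfl, h⟩ := h
    exact ⟨rfl, h.symm⟩

lemma starAdj_irrefl (x : StarVertex v narm) : ¬ starAdj x x := by
  rcases x with _ | ⟨i, j⟩
  · exact id
  · simp [starAdj]

lemma reflTransGen_starAdj_center (x : StarVertex v narm) :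
    Relation.ReflTransGen starAdj none x := by
  rcases x with _ | ⟨i, j, hj⟩
  · exact .refl
  · induction j with
    | zero => exact .single rfl
    | succ j ih => exact (ih (by omega)).tail ⟨rfl, .inl rfl⟩

open Classical in
lemma starDot_single (β : ℕ) (α : (i : Fin v) → Fin (narm i) → ℕ)
    (W : StarVertex v narm → ℤ) (x : StarVertex v narm) :
    starDot β α W (Pi.single x 1) = W x * starLabel β α x + ∑ a ∈ univ with starAdj a x, W a := by
  have hsummand : ∀ a, W a * starMat β α a x =
      (if a = x then W x * starLabel β α x else 0) + if starAdj a x then W a else 0 := by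
    intro a
    by_cases hax : a = x
    · subst hax
      simp [starMat, starAdj_irrefl]
    · simp [starMat, hax]
  simp only [starDot, Pi.single_apply, mul_ite, mul_one, mul_zero, ite_mul, zero_mul,
    sum_ite_eq', mem_univ, if_true, hsummand, sum_add_distrib, sum_filter]

variable {β : ℕ} {α : (i : Fin v) → Fin (narm i) → ℕ} {W : StarVertex v narm → ℤ}

lemma eq_zero_of_starAdj_of_eq_zero (hW : W ∈ starZtop β α) {x a : StarVertex v narm}
    (hx : W x = 0) (hadj : starAdj a x) : W a = 0 := by
  classical
  obtain ⟨-, hnonneg, hdot⟩ := hW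
  have hnbhd : ∑ b ∈ univ with starAdj b x, W b ≤ 0 := by
    simpa [starDot_single, hx] using hdot x
  have hle : W a ≤ ∑ b ∈ univ with starAdj b x, W b :=
    single_le_sum (fun b _ => hnonneg b) (mem_filter.mpr ⟨mem_univ a, hadj⟩)
  exact le_antisymm (hle.trans hnbhd) (hnonneg a)

lemma eq_zero_of_mem_starZtop_of_eq_zero (hW : W ∈ starZtop β α) {x : StarVertex v narm}
    (hx : W x = 0) (y : StarVertex v narm) : W y = 0 := by
  have hcenter : W none = 0 := by
    induction reflTransGen_starAdj_center x with
    | refl => exact hx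
    | tail _ hbc ih => exact ih (eq_zero_of_starAdj_of_eq_zero hW hx hbc)
  induction reflTransGen_starAdj_center y with
  | refl => exact hcenter
  | tail _ hbc ih => exact eq_zero_of_starAdj_of_eq_zero hW ih (starAdj_symm hbc)

lemma one_le_of_mem_starZtop (hW : W ∈ starZtop β α) (x : StarVertex v narm) : 1 ≤ W x := by
  by_contra! hx
  exact hW.1 (funext (eq_zero_of_mem_starZtop_of_eq_zero hW (by linarith [hW.2.1 x])))

end StarTree

section AllOnes

variable {v : ℕ} {narm : Fin v → ℕ}

open Classical in
lemma card_starAdj_center (hnarm : ∀ i, 1 ≤ narm i) :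
    #{a : StarVertex v narm | starAdj a none} = v := by
  have harm : ∀ i, #{j : Fin (narm i) | starAdj (some ⟨i, j⟩) (none : StarVertex v narm)} = 1 :=
    fun i => card_eq_one.mpr ⟨⟨0, hnarm i⟩, by
      ext j
      simp only [mem_filter, mem_univ, true_and, mem_singleton, Fin.ext_iff]
      rfl⟩
  simp only [card_filter] at harm
  rw [card_filter, Fintype.sum_option, Fintype.sum_sigma]
  simp [harm, starAdj_irrefl]

open Classical in
lemma card_starAdj_arm_le (i : Fin v) (j : Fin (narm i)) :
    #{a : StarVertex v narm | starAdj a (some ⟨i, j⟩)} ≤ 2 := by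
  let parent : StarVertex v narm :=
    if (j : ℕ) = 0 then none else some ⟨i, ⟨j - 1, by omega⟩⟩
  let child : StarVertex v narm :=
    if h : (j : ℕ) + 1 < narm i then some ⟨i, ⟨j + 1, h⟩⟩ else none
  refine (card_le_card (t := {parent, child}) ?_).trans card_le_two
  intro a ha
  rcases a with _ | ⟨i', j'⟩
  · have hj : (j : ℕ) = 0 := (mem_filter.mp ha).2
    simp [parent, hj]
  · obtain ⟨rfl, h⟩ := (mem_filter.mp ha).2
    simp only [mem_insert, mem_singleton, parent, child, Option.some_eq_ite_none_left,
      Option.some_eq_dite_none_right, Option.some.injEq, Sigma.mk.injEq, heq_eq_eq, Fin.ext_iff,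
      true_and, exists_prop]
    omega

variable {β : ℕ} {α : (i : Fin v) → Fin (narm i) → ℕ}

lemma starDot_one_single_center (hnarm : ∀ i, 1 ≤ narm i) :
    starDot β α (fun _ : StarVertex v narm => (1 : ℤ)) (Pi.single none 1) = v - β := by
  classical
  rw [starDot_single, sum_const, card_starAdj_center hnarm]
  simp [starLabel, add_comm, sub_eq_add_neg]

lemma starDot_one_single_arm_le (i : Fin v) (j : Fin (narm i)) :
    starDot β α (fun _ : StarVertex v narm => (1 : ℤ)) (Pi.single (some ⟨i, j⟩) 1) ≤ 2 - α i j := by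
  classical
  rw [starDot_single, sum_const]
  have hdeg := card_starAdj_arm_le i j
  simp only [starLabel, one_mul, nsmul_eq_mul, mul_one]
  omega

lemma one_mem_starZtop_iff (hnarm : ∀ i, 1 ≤ narm i) (hα : ∀ i j, 2 ≤ α i j) :
    (fun _ : StarVertex v narm => (1 : ℤ)) ∈ starZtop β α ↔ v ≤ β := by
  refine ⟨fun h => by simpa [starDot_one_single_center hnarm] using h.2.2 none, fun hvβ => ?_⟩
  refine ⟨fun h => one_ne_zero (congrFun h none), fun _ => zero_le_one, ?_⟩
  rintro (_ | ⟨i, j⟩)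
  · simpa [starDot_one_single_center hnarm] using hvβ
  · have h1 := starDot_one_single_arm_le (β := β) (α := α) i j
    have h2 : (2 : ℤ) ≤ α i j := by exact_mod_cast hα i j
    linarith

end AllOnes

theorem reduced_fundamental_cycle_iff_general (v : ℕ) (narm : Fin v → ℕ)
    (hnarm : ∀ i, 1 ≤ narm i) (β : ℕ)
    (α : (i : Fin v) → Fin (narm i) → ℕ) (hα : ∀ i j, 2 ≤ α i j) :
    ((fun _ : StarVertex v narm => (1 : ℤ)) ∈ starZtop β α ∧
      ∀ W ∈ starZtop β α, ∀ x : StarVertex v narm, (1 : ℤ) ≤ W x) ↔ v ≤ β := by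
  rw [← one_mem_starZtop_iff hnarm hα]
  exact ⟨And.left, fun h => ⟨h, fun _ hW => one_le_of_mem_starZtop hW⟩⟩

/-- For the star-shaped labelled tree with `v ≥ 2` arms, labels
`−β` (center, `β ≥ 1`) and `−α_{ij} ≤ −2` (arms), the reduced cycle `Z = ∑ E_k` is the
least element of `Z_top` for the componentwise order (in particular `Z ∈ Z_top`)
if and only if `β ≥ v`. -/
theorem reduced_fundamental_cycle_iff (v : ℕ) (hv : 2 ≤ v) (narm : Fin v → ℕ)
    (hnarm : ∀ i, 1 ≤ narm i) (β : ℕ) (hβ : 1 ≤ β)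
    (α : (i : Fin v) → Fin (narm i) → ℕ) (hα : ∀ i j, 2 ≤ α i j) :
    ((fun _ : StarVertex v narm => (1 : ℤ)) ∈ starZtop β α ∧
      ∀ W ∈ starZtop β α, ∀ x : StarVertex v narm, (1 : ℤ) ≤ W x) ↔ v ≤ β :=
  reduced_fundamental_cycle_iff_general v narm hnarm β α hα
end
end
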